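/- Let k ≥ 1, let 0 = t₀ < t₁ < ⋯ < t_{k−1} < t_k = ∞ and y₁,…,y_k > 0, and let η : [0,∞) → (0,∞) be the piecewise-constant function with η(t) = y_j for t ∈ [t_{j−1}, t_j). Set x_j = exp(−(t_j − t_{j−1})/y_j) for j = 1,…,k−1, and set y₀ = 0. Then for every integer m ≥ 2, the expected first coalescence time c_m = ∫₀^∞ t · (C(m,2)/η(t)) · exp(−C(m,2) ∫₀^t η(u)^{−1} du) dt equals (1/C(m,2)) · Σ_{j=1}^{k} (y_j − y_{j−1}) ∏_{l=1}^{j−1} x_l^{C(m,2)}, where the empty product equals 1. -/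

import Mathlib

open MeasureTheory Real Finset Set Filter Topology

/-! On an epoch where `η = y`, the time scale `Λ s = ∫₀ˢ η⁻¹` is affine with slope `1 / y`, so with
`n = C(m,2)` the integrand is `s (n / y) e^{-n Λ s}`, which has antiderivative
`-(s + y / n) e^{-n Λ s}`. Summing these boundary terms over the epochs (the infinite last one
contributes only its lower end), the terms `t_j e^{-n Λ t_j}` telescope away, the `y`-terms regroup
into `(y_{j+1} - y_j) e^{-n Λ t_j}`, and `e^{-n Λ t_j} = ∏_{l ≤ j} x_l ^ n`. -/

@[to_additive]
lemma Finset.prod_Icc_eq_prod_range_succ {M : Type*} [CommMonoid M] (f : ℕ → M) (n : ℕ) :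
    ∏ l ∈ Icc 1 n, f l = ∏ l ∈ range n, f (l + 1) := by
  rw [range_eq_Ico, prod_Ico_add', zero_add, Finset.Ico_add_one_right_eq_Icc]

section ExpAntiderivative

variable {r a : ℝ}

lemma hasDerivAt_neg_add_inv_mul_exp (hr : r ≠ 0) (s : ℝ) :
    HasDerivAt (fun s => -(s + r⁻¹) * exp (-r * (s - a))) (s * r * exp (-r * (s - a))) s := by
  have hlin : HasDerivAt (fun s => -r * (s - a)) (-r) s := by
    simpa using ((hasDerivAt_id s).sub_const a).const_mul (-r)
  have h : HasDerivAt (fun s => -(s + r⁻¹) * exp (-r * (s - a)))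
      (-1 * exp (-r * (s - a)) + -(s + r⁻¹) * (exp (-r * (s - a)) * -r)) s :=
    ((hasDerivAt_id' s).add_const r⁻¹).neg.mul hlin.exp
  convert h using 1
  field_simp
  ring

lemma tendsto_neg_add_inv_mul_exp (hr : 0 < r) :
    Tendsto (fun s => -(s + r⁻¹) * exp (-r * (s - a))) atTop (𝓝 0) := by
  have h1 := tendsto_rpow_mul_exp_neg_mul_atTop_nhds_zero 1 r hr
  have h0 := tendsto_rpow_mul_exp_neg_mul_atTop_nhds_zero 0 r hr
  simp only [rpow_one, rpow_zero, one_mul] at h1 h0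
  convert ((h1.add (h0.const_mul r⁻¹)).const_mul (-exp (r * a))) using 1
  · ext s
    rw [show -r * (s - a) = r * a + -r * s by ring, exp_add]
    ring
  · simp

lemma integral_mul_exp_neg_mul_sub (hr : r ≠ 0) (b : ℝ) :
    ∫ s in a..b, s * r * exp (-r * (s - a)) = a + r⁻¹ - (b + r⁻¹) * exp (-r * (b - a)) := by
  rw [intervalIntegral.integral_eq_sub_of_hasDerivAt
    (fun s _ => hasDerivAt_neg_add_inv_mul_exp hr s)
    (by apply Continuous.intervalIntegrable; fun_prop)]
  simp only [sub_self, mul_zero, exp_zero]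
  ring

lemma mul_exp_neg_mul_sub_nonneg (hr : 0 < r) (ha : 0 ≤ a) {s : ℝ} (hs : s ∈ Ioi a) :
    0 ≤ s * r * exp (-r * (s - a)) := by
  have : 0 ≤ s := ha.trans hs.le
  positivity

lemma integrableOn_Ioi_mul_exp_neg_mul_sub (hr : 0 < r) (ha : 0 ≤ a) :
    IntegrableOn (fun s => s * r * exp (-r * (s - a))) (Ioi a) :=
  integrableOn_Ioi_deriv_of_nonneg' (fun s _ => hasDerivAt_neg_add_inv_mul_exp hr.ne' s)
    (fun _ => mul_exp_neg_mul_sub_nonneg hr ha) (tendsto_neg_add_inv_mul_exp hr)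

lemma integral_Ioi_mul_exp_neg_mul_sub (hr : 0 < r) (ha : 0 ≤ a) :
    ∫ s in Ioi a, s * r * exp (-r * (s - a)) = a + r⁻¹ := by
  rw [integral_Ioi_of_hasDerivAt_of_nonneg' (fun s _ => hasDerivAt_neg_add_inv_mul_exp hr.ne' s)
    (fun _ => mul_exp_neg_mul_sub_nonneg hr ha) (tendsto_neg_add_inv_mul_exp hr)]
  simp

end ExpAntiderivative

section Epoch

variable {n y a b s : ℝ} {η Λ : ℝ → ℝ}

lemma intervalIntegrable_inv_of_eqOn_Ico (hab : a ≤ b) (hη : EqOn η (fun _ => y) (Ico a b)) :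
    IntervalIntegrable (fun u => (η u)⁻¹) volume a b := by
  refine (intervalIntegrable_iff_integrableOn_Ioo_of_le hab).2 ?_
  refine (integrableOn_const (C := y⁻¹) measure_Ioo_lt_top.ne).congr_fun (fun u hu => ?_)
    measurableSet_Ioo
  rw [hη (Ioo_subset_Ico_self hu)]

lemma integral_inv_eq_add_of_eqOn_Ico (h0a : IntervalIntegrable (fun u => (η u)⁻¹) volume 0 a)
    (has : a ≤ s) (hη : EqOn η (fun _ => y) (Ico a s)) :
    ∫ u in (0 : ℝ)..s, (η u)⁻¹ = (∫ u in (0 : ℝ)..a, (η u)⁻¹) + (s - a) / y := by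
  rw [← intervalIntegral.integral_add_adjacent_intervals h0a
      (intervalIntegrable_inv_of_eqOn_Ico has hη),
    intervalIntegral.integral_congr_Ioo_of_le has (g := fun _ => y⁻¹)
      (fun u hu => by rw [hη (Ioo_subset_Ico_self hu)]),
    intervalIntegral.integral_const, smul_eq_mul, div_eq_mul_inv]

lemma mul_div_mul_exp_eq_of_affine (hη : η s = y) (hΛ : Λ s = Λ a + (s - a) / y) :
    s * (n / η s) * exp (-n * Λ s) =
      exp (-n * Λ a) * (s * (n / y) * exp (-(n / y) * (s - a))) := by
  rw [hη, hΛ, mul_add, exp_add, show -n * ((s - a) / y) = -(n / y) * (s - a) by ring]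
  ring

variable (hη : EqOn η (fun _ => y) (Ico a b)) (hΛ : ∀ s ∈ Icc a b, Λ s = Λ a + (s - a) / y)
include hη hΛ

lemma eqOn_Ioo_of_affine : EqOn (fun s => s * (n / η s) * exp (-n * Λ s))
    (fun s => exp (-n * Λ a) * (s * (n / y) * exp (-(n / y) * (s - a)))) (Ioo a b) :=
  fun s hs =>
    mul_div_mul_exp_eq_of_affine (hη (Ioo_subset_Ico_self hs)) (hΛ s (Ioo_subset_Icc_self hs))

lemma intervalIntegrable_epoch (hab : a ≤ b) :
    IntervalIntegrable (fun s => s * (n / η s) * exp (-n * Λ s)) volume a b := by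
  refine (intervalIntegrable_iff_integrableOn_Ioo_of_le hab).2 ?_
  refine IntegrableOn.congr_fun ?_ (eqOn_Ioo_of_affine hη hΛ).symm measurableSet_Ioo
  exact (Continuous.integrableOn_Icc (by fun_prop)).mono_set Ioo_subset_Icc_self

lemma integral_epoch (hn : n ≠ 0) (hy : y ≠ 0) (hab : a ≤ b) :
    ∫ s in a..b, s * (n / η s) * exp (-n * Λ s) =
      (a + y / n) * exp (-n * Λ a) - (b + y / n) * exp (-n * Λ b) := by
  rw [intervalIntegral.integral_congr_Ioo_of_le hab (eqOn_Ioo_of_affine hη hΛ),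
    intervalIntegral.integral_const_mul, integral_mul_exp_neg_mul_sub (div_ne_zero hn hy),
    hΛ b ⟨hab, le_rfl⟩, inv_div, mul_add, exp_add,
    show -n * ((b - a) / y) = -(n / y) * (b - a) by ring]
  ring

end Epoch

section LastEpoch

variable {n y a : ℝ} {η Λ : ℝ → ℝ}
  (hη : EqOn η (fun _ => y) (Ici a)) (hΛ : ∀ s ∈ Ici a, Λ s = Λ a + (s - a) / y)
include hη hΛ

lemma eqOn_Ioi_of_affine : EqOn (fun s => s * (n / η s) * exp (-n * Λ s))
    (fun s => exp (-n * Λ a) * (s * (n / y) * exp (-(n / y) * (s - a)))) (Ioi a) :=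
  fun s hs =>
    mul_div_mul_exp_eq_of_affine (hη (Ioi_subset_Ici_self hs)) (hΛ s (Ioi_subset_Ici_self hs))

lemma integrableOn_Ioi_last_epoch (hn : 0 < n) (hy : 0 < y) (ha : 0 ≤ a) :
    IntegrableOn (fun s => s * (n / η s) * exp (-n * Λ s)) (Ioi a) :=
  IntegrableOn.congr_fun ((integrableOn_Ioi_mul_exp_neg_mul_sub (div_pos hn hy) ha).const_mul _)
    (eqOn_Ioi_of_affine hη hΛ).symm measurableSet_Ioi

lemma integral_Ioi_last_epoch (hn : 0 < n) (hy : 0 < y) (ha : 0 ≤ a) :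
    ∫ s in Ioi a, s * (n / η s) * exp (-n * Λ s) = (a + y / n) * exp (-n * Λ a) := by
  rw [setIntegral_congr_fun measurableSet_Ioi (eqOn_Ioi_of_affine hη hΛ), integral_const_mul,
    integral_Ioi_mul_exp_neg_mul_sub (div_pos hn hy) ha, inv_div]
  ring

end LastEpoch

lemma sum_range_epoch_boundary_terms {n : ℝ} {t y : ℕ → ℝ} (ht0 : t 0 = 0) (hy0 : y 0 = 0)
    (E : ℕ → ℝ) (N : ℕ) :
    ∑ i ∈ range N, ((t i + y (i + 1) / n) * E i - (t (i + 1) + y (i + 1) / n) * E (i + 1)) +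
        (t N + y (N + 1) / n) * E N =
      n⁻¹ * ∑ i ∈ range (N + 1), (y (i + 1) - y i) * E i := by
  induction N with
  | zero => simp [ht0, hy0]; ring
  | succ N ih =>
    rw [sum_range_succ, sum_range_succ _ (N + 1), mul_add, ← ih]
    ring

theorem integral_Ioi_mul_div_mul_exp_of_piecewise_const {n : ℝ} {N : ℕ} {t y : ℕ → ℝ}
    {η : ℝ → ℝ} (hn : 0 < n) (ht0 : t 0 = 0) (hy0 : y 0 = 0) (ht : ∀ i < N, t i ≤ t (i + 1))
    (hy : ∀ i ≤ N, 0 < y (i + 1))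
    (hη : ∀ i < N, EqOn η (fun _ => y (i + 1)) (Ico (t i) (t (i + 1))))
    (hηlast : EqOn η (fun _ => y (N + 1)) (Ici (t N))) :
    ∫ s in Ioi 0, s * (n / η s) * exp (-n * ∫ u in (0 : ℝ)..s, (η u)⁻¹) =
      n⁻¹ * ∑ i ∈ range (N + 1),
        (y (i + 1) - y i) * exp (-n * ∑ l ∈ range i, (t (l + 1) - t l) / y (l + 1)) := by
  set Λ : ℝ → ℝ := fun s => ∫ u in (0 : ℝ)..s, (η u)⁻¹
  have hΛint (i : ℕ) (hi : i ≤ N) : IntervalIntegrable (fun u => (η u)⁻¹) volume 0 (t i) :=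
    ht0 ▸ IntervalIntegrable.trans_iterate fun l hl =>
      intervalIntegrable_inv_of_eqOn_Ico (ht l (by omega)) (hη l (by omega))
  have hΛ (i : ℕ) (hi : i < N) (s : ℝ) (hs : s ∈ Icc (t i) (t (i + 1))) :
      Λ s = Λ (t i) + (s - t i) / y (i + 1) :=
    integral_inv_eq_add_of_eqOn_Ico (hΛint i hi.le) hs.1
      ((hη i hi).mono (Ico_subset_Ico_right hs.2))
  have hΛlast (s : ℝ) (hs : s ∈ Ici (t N)) : Λ s = Λ (t N) + (s - t N) / y (N + 1) :=
    integral_inv_eq_add_of_eqOn_Ico (hΛint N le_rfl) hs (hηlast.mono Ico_subset_Ici_self)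
  have hΛt (i : ℕ) (hi : i ≤ N) : Λ (t i) = ∑ l ∈ range i, (t (l + 1) - t l) / y (l + 1) := by
    induction i with
    | zero => simp [Λ, ht0]
    | succ i ih =>
      rw [hΛ i (by omega) _ ⟨ht i (by omega), le_rfl⟩, ih (by omega), sum_range_succ]
  have htN : 0 ≤ t N := by
    have htelescope := sum_range_sub t N
    rw [ht0, sub_zero] at htelescope
    rw [← htelescope]
    exact sum_nonneg fun i hi => sub_nonneg.2 (ht i (mem_range.1 hi))
  have hepoch (i : ℕ) (hi : i < N) :=
    intervalIntegrable_epoch (n := n) (hη i hi) (hΛ i hi) (ht i hi)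
  have hsplit := intervalIntegral.sum_integral_adjacent_intervals hepoch
  rw [ht0] at hsplit
  rw [← intervalIntegral.integral_interval_add_Ioi' (ht0 ▸ IntervalIntegrable.trans_iterate hepoch)
      (integrableOn_Ioi_last_epoch hηlast hΛlast hn (hy N le_rfl) htN),
    integral_Ioi_last_epoch hηlast hΛlast hn (hy N le_rfl) htN, ← hsplit,
    sum_congr rfl fun i hi => integral_epoch (hη i (mem_range.1 hi)) (hΛ i (mem_range.1 hi))
      hn.ne' (hy i (mem_range.1 hi).le).ne' (ht i (mem_range.1 hi)),
    sum_range_epoch_boundary_terms ht0 hy0]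
  exact congrArg _ (sum_congr rfl fun i hi => by rw [hΛt i (Nat.lt_succ_iff.1 (mem_range.1 hi))])

theorem expected_coalescence_time_piecewise_constant_telescoped
    (k : ℕ) (hk : 1 ≤ k)
    (t : ℕ → ℝ) (ht0 : t 0 = 0)
    (htmono : ∀ j, 1 ≤ j → j ≤ k - 1 → t (j - 1) < t j)
    (y : ℕ → ℝ) (hy0 : y 0 = 0) (hy : ∀ j, 1 ≤ j → j ≤ k → 0 < y j)
    (η : ℝ → ℝ)
    (hη : ∀ j, 1 ≤ j → j ≤ k - 1 → ∀ s ∈ Set.Ico (t (j - 1)) (t j), η s = y j)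
    (hηlast : ∀ s, t (k - 1) ≤ s → η s = y k)
    (x : ℕ → ℝ)
    (hx : ∀ j, 1 ≤ j → j ≤ k - 1 → x j = Real.exp (-(t j - t (j - 1)) / y j))
    (m : ℕ) (hm : 2 ≤ m) :
    (∫ s in Set.Ioi (0 : ℝ),
        s * ((m.choose 2 : ℝ) / η s) *
          Real.exp (-(m.choose 2 : ℝ) * ∫ u in (0 : ℝ)..s, (η u)⁻¹)) =
      (1 / (m.choose 2 : ℝ)) *
        ∑ j ∈ Finset.Icc 1 k,
          (y j - y (j - 1)) * ∏ l ∈ Finset.Icc 1 (j - 1), x l ^ m.choose 2 := by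
  obtain ⟨N, rfl⟩ : ∃ N, k = N + 1 := ⟨k - 1, by omega⟩
  have hn : (0 : ℝ) < m.choose 2 := by exact_mod_cast Nat.choose_pos hm
  rw [integral_Ioi_mul_div_mul_exp_of_piecewise_const hn ht0 hy0
      (fun i hi => by simpa using (htmono (i + 1) (by omega) (by omega)).le)
      (fun i hi => hy (i + 1) (by omega) (by omega))
      (fun i hi s hs => hη (i + 1) (by omega) (by omega) s (by simpa using hs))
      (fun s hs => hηlast s (by simpa using hs)),
    one_div, sum_Icc_eq_sum_range_succ]
  refine congrArg _ (sum_congr rfl fun i hi => ?_)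
  rw [Nat.add_sub_cancel, prod_Icc_eq_prod_range_succ, mul_sum, exp_sum]
  refine congrArg _ (prod_congr rfl fun l hl => ?_)
  rw [Finset.mem_range] at hi hl
  rw [hx (l + 1) (by omega) (by omega), ← exp_nat_mul, Nat.add_sub_cancel]
  ring_nf
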